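/- arXiv:2507.20298 — 2 statements merged into one kernel-verified Lean document; each statement's English description precedes it below -/
import Mathlib

section
/- Let p(n) denote the number of partitions of n (with p(0) = 1), and let S_□ := {k^2 : k ≥ 1} ∪ {2k^2 : k ≥ 1}. (i) For any nonnegative integer N such that p(N) is even, or such that N is even and p(N) is odd, the cardinality of {(m, s) ∈ ℕ × ℕ : p(m) is odd, s ∈ S_□, m + s = N} is even. (ii) For any odd N with p(N) odd, the cardinality of {(m, s) ∈ ℕ × ℕ : p(m) is odd, s ∈ S_□, m + s = N} is odd. -/
/-- The set of positive squares and twice positive squares. -/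
def SSq : Set ℕ := {s | ∃ k : ℕ, 1 ≤ k ∧ s = k ^ 2} ∪ {s | ∃ k : ℕ, 1 ≤ k ∧ s = 2 * k ^ 2}

/-- The number of unrestricted partitions of `n` (so `partitionCount 0 = 1`). -/
def partitionCount (n : ℕ) : ℕ := Fintype.card (Nat.Partition n)

/-!
The pairs counted correspond to the `s ∈ S_□` with `s ≤ N` and `p(N - s)` odd. Since `σ(s)` is odd
exactly when `s` is a square or twice a square, their number is `∑_{k=1}^N σ(k) p(N - k)` modulo 2,
which equals `N p(N)` by Euler's recurrence. The recurrence is proved by double counting: sum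
`n = ∑_d d · m_d(λ)` over all partitions `λ ⊢ n`, and use that the partitions of `n` with at least
`j` parts equal to `d` correspond to the partitions of `n - dj`.
-/

open Finset ArithmeticFunction
open scoped ArithmeticFunction.sigma

namespace Nat

lemma odd_sigma_one_prime_pow_iff {p e : ℕ} (hp : p.Prime) :
    Odd (σ 1 (p ^ e)) ↔ p = 2 ∨ Even e := by
  rw [sigma_one_apply_prime_pow hp, odd_sum_iff_odd_card_odd]
  rcases eq_or_ne p 2 with rfl | hp2
  · have : {i ∈ range (e + 1) | Odd (2 ^ i)} = {0} := by
      ext i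
      simp [← not_even_iff_odd, even_pow]
    simp [this]
  · rw [filter_true_of_mem fun i _ => (hp.odd_of_ne_two hp2).pow, card_range, odd_add_one,
      not_odd_iff_even, or_iff_right hp2]

lemma odd_sigma_one_iff {n : ℕ} (hn : n ≠ 0) :
    Odd (σ 1 n) ↔ ∀ p, p.Prime → p ≠ 2 → Even (n.factorization p) := by
  rw [isMultiplicative_sigma.multiplicative_factorization _ hn, Finsupp.prod,
    ← Nat.not_even_iff_odd, even_iff_two_dvd, prime_two.prime.dvd_finsetProd_iff]
  simp only [not_exists, not_and, ← even_iff_two_dvd, Nat.not_even_iff_odd, support_factorization]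
  refine ⟨fun h p hp hp2 => ?_, fun h p hp => ?_⟩
  · by_cases hpn : p ∈ n.primeFactors
    · exact ((odd_sigma_one_prime_pow_iff hp).1 (h p hpn)).resolve_left hp2
    · rw [← support_factorization, Finsupp.notMem_support_iff] at hpn
      simp [hpn]
  · have hp' := prime_of_mem_primeFactors hp
    exact (odd_sigma_one_prime_pow_iff hp').2 (or_iff_not_imp_left.2 (h p hp'))

lemma factorization_two_mul_of_ne_two {n p : ℕ} (hn : n ≠ 0) (hp : p ≠ 2) :
    (2 * n).factorization p = n.factorization p := by
  simp [factorization_mul two_ne_zero hn, prime_two.factorization, hp.symm]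

lemma exists_sq_eq_of_forall_even_factorization {n : ℕ}
    (h : ∀ p, p.Prime → Even (n.factorization p)) : ∃ k, k ^ 2 = n := by
  rcases eq_or_ne n 0 with rfl | hn
  · exact ⟨0, rfl⟩
  refine ⟨n.factorization.prod fun p e => p ^ (e / 2), ?_⟩
  conv_rhs => rw [← prod_factorization_pow_eq_self hn]
  rw [Finsupp.prod, Finsupp.prod, ← prod_pow]
  refine prod_congr rfl fun p hp => ?_
  rw [← pow_mul, Nat.div_mul_cancel (h p (prime_of_mem_primeFactors (by simpa using hp))).two_dvd]

lemma sum_Icc_sum_divisors {M : Type*} [AddCommMonoid M] (n : ℕ) (f : ℕ → ℕ → M) :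
    ∑ k ∈ Icc 1 n, ∑ d ∈ k.divisors, f d k = ∑ d ∈ Icc 1 n, ∑ m ∈ Icc 1 (n / d), f d (d * m) := by
  have multiples {d : ℕ} (hd : 0 < d) :
      ∑ k ∈ Icc 1 n with d ∣ k, f d k = ∑ m ∈ Icc 1 (n / d), f d (d * m) := by
    refine sum_nbij' (· / d) (d * ·) (fun k hk => ?_) (fun m hm => ?_) (fun k hk => ?_)
      (fun m _ => ?_) (fun k hk => ?_)
    · simp only [mem_filter, mem_Icc] at hk ⊢
      exact ⟨Nat.div_pos (Nat.le_of_dvd hk.1.1 hk.2) hd, Nat.div_le_div_right hk.1.2⟩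
    · simp only [mem_filter, mem_Icc] at hm ⊢
      have := (Nat.le_div_iff_mul_le hd).1 hm.2
      exact ⟨⟨Nat.mul_pos hd hm.1, by lia⟩, dvd_mul_right d m⟩
    · exact Nat.mul_div_cancel' (mem_filter.1 hk).2
    · exact Nat.mul_div_cancel_left m hd
    · rw [Nat.mul_div_cancel' (mem_filter.1 hk).2]
  rw [← sum_congr rfl fun d hd => multiples (mem_Icc.1 hd).1]
  refine sum_comm' fun k d => ?_
  simp only [mem_Icc, mem_divisors, mem_filter]
  constructor
  · rintro ⟨⟨hk1, hkn⟩, hdk, -⟩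
    exact ⟨⟨⟨hk1, hkn⟩, hdk⟩, Nat.pos_of_dvd_of_pos hdk hk1, (Nat.le_of_dvd hk1 hdk).trans hkn⟩
  · rintro ⟨⟨⟨hk1, hkn⟩, hdk⟩, -⟩
    exact ⟨⟨hk1, hkn⟩, hdk, by lia⟩

end Nat

lemma mem_SSq_iff {n : ℕ} (hn : n ≠ 0) :
    n ∈ SSq ↔ ∀ p, p.Prime → p ≠ 2 → Even (n.factorization p) := by
  refine ⟨?_, fun h => ?_⟩
  · rintro (⟨k, -, rfl⟩ | ⟨k, hk, rfl⟩) p - hp2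
    · rw [Nat.factorization_pow]; simp
    · rw [Nat.factorization_two_mul_of_ne_two (by positivity) hp2, Nat.factorization_pow]; simp
  rcases Nat.even_or_odd (n.factorization 2) with h2 | h2
  · obtain ⟨k, rfl⟩ : ∃ k, k ^ 2 = n := by
      refine Nat.exists_sq_eq_of_forall_even_factorization fun p hp => ?_
      rcases eq_or_ne p 2 with rfl | hp2
      exacts [h2, h p hp hp2]
    exact Or.inl ⟨k, Nat.one_le_iff_ne_zero.2 (by rintro rfl; simp at hn), rfl⟩
  · obtain ⟨k, hk⟩ : ∃ k, k ^ 2 = 2 * n := by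
      refine Nat.exists_sq_eq_of_forall_even_factorization fun p hp => ?_
      rcases eq_or_ne p 2 with rfl | hp2
      · simpa [Nat.factorization_mul two_ne_zero hn, Nat.prime_two.factorization] using h2.one_add
      · exact Nat.factorization_two_mul_of_ne_two hn hp2 ▸ h p hp hp2
    obtain ⟨j, rfl⟩ : 2 ∣ k := Nat.prime_two.dvd_of_dvd_pow (hk ▸ dvd_mul_right 2 n)
    exact Or.inr ⟨j, Nat.one_le_iff_ne_zero.2 (by rintro rfl; simp at hk; exact hn hk), by linarith⟩

lemma pos_of_mem_SSq {s : ℕ} (hs : s ∈ SSq) : 0 < s := by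
  rcases hs with ⟨k, hk, rfl⟩ | ⟨k, hk, rfl⟩ <;> positivity

lemma odd_sigma_one_iff_mem_SSq {n : ℕ} (hn : n ≠ 0) : Odd (σ 1 n) ↔ n ∈ SSq :=
  (Nat.odd_sigma_one_iff hn).trans (mem_SSq_iff hn).symm

namespace Nat.Partition

lemma sum_parts_sub_replicate_add {n d m : ℕ} (p : n.Partition) (h : m ≤ p.parts.count d) :
    (p.parts - Multiset.replicate m d).sum + d * m = n := by
  have := congrArg Multiset.sum (tsub_add_cancel_of_le (Multiset.le_count_iff_replicate_le.1 h))
  rwa [Multiset.sum_add, p.parts_sum, Multiset.sum_replicate, smul_eq_mul, mul_comm] at this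

lemma mul_count_le {n : ℕ} (p : n.Partition) (d : ℕ) : d * p.parts.count d ≤ n :=
  (p.sum_parts_sub_replicate_add le_rfl).le.trans' le_add_self

def partitionWithReplicateEquiv {n d m : ℕ} (hd : 0 < d) (h : d * m ≤ n) :
    {p : n.Partition // m ≤ p.parts.count d} ≃ (n - d * m).Partition where
  toFun p := ⟨p.1.parts - Multiset.replicate m d,
    fun hi => p.1.parts_pos (Multiset.mem_of_le tsub_le_self hi),
    by have := p.1.sum_parts_sub_replicate_add p.2; lia⟩
  invFun q := ⟨⟨q.parts + Multiset.replicate m d,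
    fun hi => (Multiset.mem_add.1 hi).elim q.parts_pos
      fun hi => Multiset.eq_of_mem_replicate hi ▸ hd,
    by rw [Multiset.sum_add, q.parts_sum, Multiset.sum_replicate, smul_eq_mul]; lia⟩, by simp⟩
  left_inv p := Subtype.ext <| Partition.ext <|
    tsub_add_cancel_of_le (Multiset.le_count_iff_replicate_le.1 p.2)
  right_inv q := Partition.ext <| add_tsub_cancel_right _ _

lemma card_filter_le_count {n d m : ℕ} (hd : 0 < d) (h : d * m ≤ n) :
    #{p : n.Partition | m ≤ p.parts.count d} = Fintype.card (n - d * m).Partition := by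
  rw [← Fintype.card_subtype, Fintype.card_congr (partitionWithReplicateEquiv hd h)]

lemma sum_count_eq {n d : ℕ} (hd : 0 < d) :
    ∑ p : n.Partition, p.parts.count d =
      ∑ m ∈ Icc 1 (n / d), Fintype.card (n - d * m).Partition := by
  calc ∑ p : n.Partition, p.parts.count d
      = ∑ p : n.Partition, #{m ∈ Icc 1 (n / d) | m ≤ p.parts.count d} := by
        refine sum_congr rfl fun p _ => ?_
        have : p.parts.count d ≤ n / d :=
          (Nat.le_div_iff_mul_le hd).2 (mul_comm d _ ▸ p.mul_count_le d)
        rw [show {m ∈ Icc 1 (n / d) | m ≤ p.parts.count d} = Icc 1 (p.parts.count d) by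
          ext m; simp only [mem_filter, mem_Icc]; lia, card_Icc, add_tsub_cancel_right]
    _ = ∑ m ∈ Icc 1 (n / d), #{p : n.Partition | m ≤ p.parts.count d} :=
        sum_card_bipartiteAbove_eq_sum_card_bipartiteBelow _
    _ = _ := sum_congr rfl fun m hm => card_filter_le_count hd <|
        mul_comm m d ▸ (Nat.le_div_iff_mul_le hd).1 (mem_Icc.1 hm).2

lemma sum_mul_count_eq {n : ℕ} (p : n.Partition) : ∑ d ∈ Icc 1 n, d * p.parts.count d = n := by
  have hsub : p.parts.toFinset ⊆ Icc 1 n := fun i hi => by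
    rw [Multiset.mem_toFinset] at hi
    exact mem_Icc.2 ⟨p.parts_pos hi, p.le_of_mem_parts hi⟩
  conv_rhs => rw [← p.parts_sum, sum_multiset_count_of_subset _ _ hsub]
  simp only [smul_eq_mul, mul_comm]

end Nat.Partition

lemma mul_partitionCount_eq_sum_sigma_one_mul (n : ℕ) :
    n * partitionCount n = ∑ k ∈ Icc 1 n, σ 1 k * partitionCount (n - k) := by
  calc n * partitionCount n
      = ∑ p : n.Partition, ∑ d ∈ Icc 1 n, d * p.parts.count d := by
        simp [Nat.Partition.sum_mul_count_eq, partitionCount, mul_comm]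
    _ = ∑ d ∈ Icc 1 n, ∑ m ∈ Icc 1 (n / d), d * partitionCount (n - d * m) := by
        rw [sum_comm]
        refine sum_congr rfl fun d hd => ?_
        rw [← mul_sum, ← mul_sum, Nat.Partition.sum_count_eq (mem_Icc.1 hd).1]
        rfl
    _ = ∑ k ∈ Icc 1 n, σ 1 k * partitionCount (n - k) := by
        rw [← Nat.sum_Icc_sum_divisors n fun d k => d * partitionCount (n - k)]
        simp [sigma_one_apply, sum_mul]

lemma ncard_eq_card_filter_odd_sigma_one_mul (N : ℕ) :
    Set.ncard {p : ℕ × ℕ | Odd (partitionCount p.1) ∧ p.2 ∈ SSq ∧ p.1 + p.2 = N} =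
      #{s ∈ Icc 1 N | Odd (σ 1 s * partitionCount (N - s))} := by
  have : {p : ℕ × ℕ | Odd (partitionCount p.1) ∧ p.2 ∈ SSq ∧ p.1 + p.2 = N} =
      (fun s => (N - s, s)) '' ↑{s ∈ Icc 1 N | Odd (σ 1 s * partitionCount (N - s))} := by
    ext ⟨m, s⟩
    simp only [Set.mem_ofPred_eq, Set.mem_image, coe_filter, mem_Icc, Prod.mk.injEq]
    constructor
    · rintro ⟨hm, hs, rfl⟩
      refine ⟨s, ⟨⟨pos_of_mem_SSq hs, le_add_self⟩, ?_⟩, add_tsub_cancel_right m s, rfl⟩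
      rw [Nat.odd_mul, odd_sigma_one_iff_mem_SSq (pos_of_mem_SSq hs).ne', add_tsub_cancel_right]
      exact ⟨hs, hm⟩
    · rintro ⟨s, ⟨⟨hs1, hsN⟩, hodd⟩, rfl, rfl⟩
      rw [Nat.odd_mul, odd_sigma_one_iff_mem_SSq (by lia)] at hodd
      exact ⟨hodd.2, hodd.1, by lia⟩
  rw [this, Set.ncard_image_of_injective _ fun a b h => (Prod.ext_iff.1 h).2, Set.ncard_coe_finset]

lemma even_ncard_iff (N : ℕ) :
    Even (Set.ncard {p : ℕ × ℕ | Odd (partitionCount p.1) ∧ p.2 ∈ SSq ∧ p.1 + p.2 = N}) ↔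
      Even (N * partitionCount N) := by
  rw [ncard_eq_card_filter_odd_sigma_one_mul, ← even_sum_iff_even_card_odd,
    mul_partitionCount_eq_sum_sigma_one_mul]

theorem stmt4 :
    (∀ N : ℕ,
      (Even (partitionCount N) ∨ (Even N ∧ Odd (partitionCount N))) →
      Even (Set.ncard
        {p : ℕ × ℕ | Odd (partitionCount p.1) ∧ p.2 ∈ SSq ∧ p.1 + p.2 = N})) ∧
    (∀ N : ℕ, Odd N → Odd (partitionCount N) →
      Odd (Set.ncard
        {p : ℕ × ℕ | Odd (partitionCount p.1) ∧ p.2 ∈ SSq ∧ p.1 + p.2 = N})) := by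
  refine ⟨fun N h => ?_, fun N hN hp => ?_⟩
  · rw [even_ncard_iff, Nat.even_mul]
    exact h.symm.imp And.left id
  · rw [← Nat.not_even_iff_odd, even_ncard_iff, Nat.even_mul, not_or, Nat.not_even_iff_odd,
      Nat.not_even_iff_odd]
    exact ⟨hN, hp⟩
end

section
/- Let A(q) = f_1^{3j_1+1} · ∏_{i: 3∤i} f_i^{3j_i} · ∏_{i: 3|i} f_i^{j_i} =: Σ_{n≥0} a_n q^n be any eta quotient of the indicated form (a finite product, all j_i ∈ ℤ), and let B(q) := f_3 · f_1^{-3} · A(q) =: Σ_{n≥0} b_n q^n. Then for every n ≥ 0, a_n ≡ 0 (mod 9) if and only if b_n ≡ 0 (mod 9). -/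
open PowerSeries Finset

/-- `etaF j` is the formal power series `f_j = ∏_{n=1}^∞ (1 - q^{j n})` in `ℤ⟦q⟧`,
defined through its truncations: for `j ≥ 1` the coefficient of `q^N` in the infinite
product only depends on the (finitely many) factors with `j * n ≤ N`. -/
noncomputable def etaF (j : ℕ) : PowerSeries ℤ :=
  PowerSeries.mk fun N =>
    PowerSeries.coeff N (∏ n ∈ Finset.Icc 1 N, (1 - (PowerSeries.X : PowerSeries ℤ) ^ (j * n)))

lemma constantCoeff_etaF (j : ℕ) : PowerSeries.constantCoeff (etaF j) = 1 := by
  rw [← PowerSeries.coeff_zero_eq_constantCoeff_apply]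
  simp [etaF]

lemma isUnit_etaF (j : ℕ) : IsUnit (etaF j) := by
  rw [PowerSeries.isUnit_iff_constantCoeff, constantCoeff_etaF]
  exact isUnit_one

/-- `etaF j` as a unit of `ℤ⟦q⟧`, so that arbitrary integer powers make sense. -/
noncomputable def etaU (j : ℕ) : (PowerSeries ℤ)ˣ := (isUnit_etaF j).unit

@[simp] lemma etaU_val (j : ℕ) : (etaU j : PowerSeries ℤ) = etaF j := (isUnit_etaF j).unit_spec

/-!
Write `θ = q d/dq` (`eulerDeriv`). The heart of the matter is the congruence `f₃ ≡ f₁³ - θ(f₁³) (mod 9)`.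
On truncated products it comes from `1 - x³ = (1 - x)³ (1 + 3x/(1 - x)²)`: modulo 9,
`f₃/f₁³ ≡ 1 + 3 ∑ qᵐ/(1 - qᵐ)²` while `θ(f₁³)/f₁³ = -3 ∑ m qᵐ/(1 - qᵐ)`, and both Lambert
series are `∑ σ(n) qⁿ`.

The conditions on the exponents say that `A = f₁ U` with `θU ≡ 0 (mod 3)`, because `U` is a
product of cubes and of the `f_i` with `3 ∣ i`, which are power series in `q³`. Hence
`B = f₃ f₁⁻³ A ≡ A - 3 f₁⁻¹ θ(f₁) A ≡ A - 3 θA (mod 9)`, that is `b_n ≡ (1 - 3n) a_n`, and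
`1 - 3n` is invertible modulo 9. Congruences modulo 9 are stated as equalities over a ring in
which `9 = 0`, eventually `ZMod 9`.
-/

section CommRing

variable {R : Type*} [CommRing R]

theorem dvd_prod_sub_one {ι : Type*} {a : R} {s : Finset ι} {g : ι → R}
    (h : ∀ i ∈ s, a ∣ g i - 1) : a ∣ ∏ i ∈ s, g i - 1 :=
  prod_induction g (fun x => a ∣ x - 1)
    (fun x y hx hy => by
      rw [show x * y - 1 = x * (y - 1) + (x - 1) by ring]
      exact dvd_add (hy.mul_left x) hx)
    (by simp) h

theorem prod_one_add_mul_of_sq_eq_zero {ι : Type*} {t : R} (ht : t ^ 2 = 0) (s : Finset ι)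
    (y : ι → R) : ∏ i ∈ s, (1 + t * y i) = 1 + t * ∑ i ∈ s, y i := by
  classical
  induction s using Finset.induction_on with
  | empty => simp
  | insert j s hj ih =>
    rw [prod_insert hj, sum_insert hj, ih]
    linear_combination (y j * ∑ i ∈ s, y i) * ht

theorem Derivation.apply_prod_of_mul_eq_one {S : Type*} [CommRing S] [Algebra S R]
    (D : Derivation S R R) {ι : Type*} (s : Finset ι) {a w : ι → R}
    (h : ∀ i ∈ s, a i * w i = 1) :
    D (∏ i ∈ s, a i) = (∏ i ∈ s, a i) * ∑ i ∈ s, D (a i) * w i := by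
  classical
  induction s using Finset.induction_on with
  | empty => simp
  | insert j s hj ih =>
    rw [prod_insert hj, sum_insert hj, D.leibniz, smul_eq_mul, smul_eq_mul,
      ih fun i hi => h i (mem_insert_of_mem hi)]
    linear_combination (-(∏ i ∈ s, a i) * D (a j)) * h j (mem_insert_self j s)

theorem mul_eq_sum_range_pow_succ_add {x w : R} (hw : (1 - x) * w = 1) (N : ℕ) :
    x * w = ∑ k ∈ range N, x ^ (k + 1) + x ^ (N + 1) * w := by
  have hgeom := mul_neg_geom_sum x N
  have hshift : ∑ k ∈ range N, x ^ (k + 1) = x * ∑ k ∈ range N, x ^ k := by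
    rw [mul_sum]; exact sum_congr rfl fun k _ => pow_succ' x k
  rw [hshift]
  linear_combination (-(x * w)) * hgeom + (x * ∑ k ∈ range N, x ^ k) * hw

theorem sq_mul_sum_range_succ_mul_pow_succ (x : R) (N : ℕ) :
    (1 - x) ^ 2 * ∑ k ∈ range N, ((k + 1 : ℕ) : R) * x ^ (k + 1)
      = x - (N + 1) * x ^ (N + 1) + N * x ^ (N + 2) := by
  induction N with
  | zero => simp
  | succ N ih =>
    rw [sum_range_succ, mul_add, ih]
    push_cast
    ring

theorem mul_sq_eq_sum_range_succ_mul_pow_succ_add {x w : R} (hw : (1 - x) * w = 1) (N : ℕ) :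
    x * w ^ 2 = ∑ k ∈ range N, ((k + 1 : ℕ) : R) * x ^ (k + 1)
      + x ^ (N + 1) * ((N + 1 - N * x) * w ^ 2) := by
  linear_combination (-w ^ 2) * sq_mul_sum_range_succ_mul_pow_succ x N
    + (∑ k ∈ range N, ((k + 1 : ℕ) : R) * x ^ (k + 1)) * ((1 - x) * w + 1) * hw

theorem sum_range_sum_range_succ_mul_pow_pow (x : R) (N : ℕ) :
    ∑ m ∈ range N, ∑ k ∈ range N, ((k + 1 : ℕ) : R) * (x ^ (m + 1)) ^ (k + 1)
      = ∑ m ∈ range N, ((m + 1 : ℕ) : R) * ∑ k ∈ range N, (x ^ (m + 1)) ^ (k + 1) := by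
  simp_rw [mul_sum, ← pow_mul]
  rw [sum_comm]
  exact sum_congr rfl fun m _ => sum_congr rfl fun k _ => by rw [mul_comm (k + 1)]

end CommRing

namespace PowerSeries

variable {R : Type*} [CommRing R]

theorem coeff_eq_of_X_pow_dvd_sub {f g : R⟦X⟧} {n m : ℕ} (h : X ^ n ∣ f - g) (hm : m < n) :
    coeff m f = coeff m g :=
  sub_eq_zero.mp <| by rw [← map_sub]; exact X_pow_dvd_iff.mp h m hm

theorem X_pow_dvd_expand (p : ℕ) (hp : p ≠ 0) {n : ℕ} {f : R⟦X⟧} (h : X ^ n ∣ f) :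
    X ^ n ∣ expand p hp f := by
  obtain ⟨g, rfl⟩ := h
  rw [map_mul, map_pow, expand_X, ← pow_mul]
  exact (pow_dvd_pow X (Nat.le_mul_of_pos_left n (Nat.pos_of_ne_zero hp))).mul_right _

variable (R) in
noncomputable def eulerDeriv : Derivation R R⟦X⟧ R⟦X⟧ := (X : R⟦X⟧) • d⁄dX R

@[simp] theorem coeff_eulerDeriv (f : R⟦X⟧) (n : ℕ) :
    coeff n (eulerDeriv R f) = n * coeff n f := by
  rw [eulerDeriv, Derivation.smul_apply, smul_eq_mul]
  cases n with
  | zero => simp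
  | succ n => rw [coeff_succ_X_mul, coeff_derivative]; push_cast; ring

theorem eulerDeriv_X_pow (k : ℕ) : eulerDeriv R (X ^ k) = (k : R⟦X⟧) * X ^ k := by
  ext n
  rw [coeff_eulerDeriv, coeff_X_pow, ← map_natCast (C (R := R)), coeff_C_mul, coeff_X_pow]
  split_ifs with h <;> simp [h]

theorem map_eulerDeriv {S : Type*} [CommRing S] (φ : R →+* S) (f : R⟦X⟧) :
    map φ (eulerDeriv R f) = eulerDeriv S (map φ f) := by
  ext n; simp

theorem X_pow_dvd_eulerDeriv {n : ℕ} {f : R⟦X⟧} (h : X ^ n ∣ f) : X ^ n ∣ eulerDeriv R f := by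
  rw [X_pow_dvd_iff] at h ⊢
  intro m hm
  rw [coeff_eulerDeriv, h m hm, mul_zero]

theorem eulerDeriv_expand (p : ℕ) (hp : p ≠ 0) (f : R⟦X⟧) :
    eulerDeriv R (expand p hp f) = p * expand p hp (eulerDeriv R f) := by
  ext n
  rw [← map_natCast (C (R := R)), coeff_C_mul]
  simp only [coeff_eulerDeriv, coeff_expand]
  split_ifs with h
  · obtain ⟨k, rfl⟩ := h
    rw [Nat.mul_div_cancel_left k (Nat.pos_of_ne_zero hp)]
    push_cast; ring
  · simp

def unitsEulerDerivDvd (a : R⟦X⟧) : Subgroup R⟦X⟧ˣ where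
  carrier := {u | a ∣ eulerDeriv R u}
  one_mem' := by simp
  mul_mem' {u v} hu hv := by
    simp only [Set.mem_ofPred_eq, Units.val_mul, Derivation.leibniz, smul_eq_mul] at hu hv ⊢
    exact dvd_add (hv.mul_left _) (hu.mul_left _)
  inv_mem' {u} hu := by
    simp only [Set.mem_ofPred_eq] at hu ⊢
    rw [(eulerDeriv R).leibniz_of_mul_eq_one u.inv_mul, smul_eq_mul]
    exact hu.mul_left _

theorem pow_mem_unitsEulerDerivDvd (p : ℕ) (v : R⟦X⟧ˣ) :
    v ^ p ∈ unitsEulerDerivDvd (p : R⟦X⟧) := by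
  show (p : R⟦X⟧) ∣ eulerDeriv R ↑(v ^ p)
  rw [Units.val_pow_eq_pow_val, Derivation.leibniz_pow, nsmul_eq_mul, smul_eq_mul]
  exact dvd_mul_right _ _

theorem mem_unitsEulerDerivDvd_of_eq_expand (p : ℕ) (hp : p ≠ 0) {u : R⟦X⟧ˣ} {f : R⟦X⟧}
    (hu : (u : R⟦X⟧) = expand p hp f) : u ∈ unitsEulerDerivDvd (p : R⟦X⟧) := by
  show (p : R⟦X⟧) ∣ eulerDeriv R u
  rw [hu, eulerDeriv_expand]
  exact dvd_mul_right _ _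

/-- Modulo `X ^ (N + 1)` both sums are `∑ σ(n) Xⁿ`: after expanding each term as a geometric
series they differ only by swapping the two summation indices. -/
theorem X_pow_dvd_lambert_sub_lambert (N : ℕ) {w : ℕ → R⟦X⟧}
    (hw : ∀ m, (1 - X ^ (m + 1)) * w m = 1) :
    X ^ (N + 1) ∣ ∑ m ∈ range N, X ^ (m + 1) * w m ^ 2
      - ∑ m ∈ range N, ((m + 1 : ℕ) : R⟦X⟧) * (X ^ (m + 1) * w m) := by
  have hrem : ∀ m, X ^ (N + 1) ∣ ((X : R⟦X⟧) ^ (m + 1)) ^ (N + 1) := fun m =>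
    pow_dvd_pow_of_dvd (dvd_pow_self X m.succ_ne_zero) _
  simp only [mul_sq_eq_sum_range_succ_mul_pow_succ_add (hw _) N,
    mul_eq_sum_range_pow_succ_add (hw _) N, mul_add, sum_add_distrib,
    sum_range_sum_range_succ_mul_pow_pow, add_sub_add_left_eq_sub, ← sum_sub_distrib]
  exact dvd_sum fun m _ => dvd_sub ((hrem m).mul_right _) (((hrem m).mul_right _).mul_left _)

theorem X_pow_dvd_prod_sub_cube_add_eulerDeriv_cube (h9 : (9 : R) = 0) (N : ℕ) :
    X ^ (N + 1) ∣ ∏ n ∈ range N, (1 - X ^ (3 * (n + 1)))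
      - (∏ n ∈ range N, (1 - X ^ (n + 1))) ^ 3
      + eulerDeriv R ((∏ n ∈ range N, (1 - (X : R⟦X⟧) ^ (n + 1))) ^ 3) := by
  have h3 : (3 : R⟦X⟧) ^ 2 = 0 := by
    rw [← map_ofNat C 3, ← map_pow, show (3 : R) ^ 2 = 9 by norm_num, h9, map_zero]
  choose w hw using fun m : ℕ => (isUnit_iff_constantCoeff.mpr
    (by simp : IsUnit (constantCoeff (1 - (X : R⟦X⟧) ^ (m + 1))))).exists_right_inv
  set F := ∏ n ∈ range N, (1 - (X : R⟦X⟧) ^ (n + 1))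
  have hQ : ∏ n ∈ range N, (1 - (X : R⟦X⟧) ^ (3 * (n + 1)))
      = F ^ 3 * (1 + 3 * ∑ n ∈ range N, X ^ (n + 1) * w n ^ 2) := by
    rw [← prod_one_add_mul_of_sq_eq_zero h3, ← prod_pow, ← prod_mul_distrib]
    refine prod_congr rfl fun n _ => ?_
    -- `1 - x³ = (1 - x)³ + 3x(1 - x)`
    rw [pow_mul']
    linear_combination (-3 * X ^ (n + 1) * (1 - X ^ (n + 1)) * ((1 - X ^ (n + 1)) * w n + 1)) * hw n
  have hθF : eulerDeriv R (F ^ 3)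
      = -(3 * F ^ 3 * ∑ n ∈ range N, ((n + 1 : ℕ) : R⟦X⟧) * (X ^ (n + 1) * w n)) := by
    rw [(eulerDeriv R).leibniz_pow, (eulerDeriv R).apply_prod_of_mul_eq_one _ fun n _ => hw n]
    simp only [map_sub, Derivation.map_one_eq_zero, eulerDeriv_X_pow, zero_sub, neg_mul,
      sum_neg_distrib, nsmul_eq_mul, smul_eq_mul, mul_assoc]
    ring
  have hcore : ∏ n ∈ range N, (1 - (X : R⟦X⟧) ^ (3 * (n + 1))) - F ^ 3 + eulerDeriv R (F ^ 3)
      = 3 * F ^ 3 * (∑ n ∈ range N, X ^ (n + 1) * w n ^ 2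
        - ∑ n ∈ range N, ((n + 1 : ℕ) : R⟦X⟧) * (X ^ (n + 1) * w n)) := by
    rw [hQ, hθF]; ring
  rw [hcore]
  exact (X_pow_dvd_lambert_sub_lambert N hw).mul_left _

theorem mul_eq_sub_three_mul_eulerDeriv (h9 : (9 : R) = 0)
    {f f' g U : R⟦X⟧} (hf : f * f' = 1) (hg : g = f ^ 3 - eulerDeriv R (f ^ 3))
    (hU : (3 : R⟦X⟧) ∣ eulerDeriv R U) :
    g * f' ^ 3 * (f * U) = f * U - 3 * eulerDeriv R (f * U) := by
  obtain ⟨V, hV⟩ := hU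
  have h9' : (9 : R⟦X⟧) = 0 := by rw [← map_ofNat C 9, h9, map_zero]
  rw [hg, (eulerDeriv R).leibniz_pow, (eulerDeriv R).leibniz, hV]
  simp only [smul_eq_mul, nsmul_eq_mul, Nat.reduceSub, Nat.cast_ofNat]
  linear_combination (f * U - 3 * U * eulerDeriv R f) * ((f * f') ^ 2 + f * f' + 1) * hf
    + (f * V) * h9'

end PowerSeries

theorem coeff_etaF (j N : ℕ) :
    coeff N (etaF j) = coeff N (∏ n ∈ range N, (1 - X ^ (j * (n + 1)))) := by
  rw [etaF, coeff_mk, range_eq_Ico, prod_Ico_add' (fun n => 1 - (X : ℤ⟦X⟧) ^ (j * n)),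
    zero_add, Ico_add_one_right_eq_Icc]

theorem X_pow_dvd_etaF_sub_prod {j : ℕ} (hj : 0 < j) (N : ℕ) :
    X ^ (N + 1) ∣ etaF j - ∏ n ∈ range N, (1 - X ^ (j * (n + 1))) := by
  rw [X_pow_dvd_iff]
  intro M hM
  have htail : X ^ (M + 1) ∣ ∏ n ∈ Ico M N, (1 - (X : ℤ⟦X⟧) ^ (j * (n + 1))) - 1 :=
    dvd_prod_sub_one fun n hn => by
      rw [sub_sub_cancel_left, dvd_neg]
      exact pow_dvd_pow X (by nlinarith [(mem_Ico.mp hn).1])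
  have hPN : X ^ (M + 1) ∣ ∏ n ∈ range N, (1 - (X : ℤ⟦X⟧) ^ (j * (n + 1)))
      - ∏ n ∈ range M, (1 - X ^ (j * (n + 1))) := by
    rw [← prod_range_mul_prod_Ico _ (Nat.le_of_lt_succ hM), ← mul_sub_one]
    exact htail.mul_left _
  rw [map_sub, coeff_etaF, sub_eq_zero]
  exact (coeff_eq_of_X_pow_dvd_sub hPN M.lt_succ_self).symm

theorem etaF_mul_eq_expand (p : ℕ) (hp : p ≠ 0) {k : ℕ} (hk : 0 < k) :
    etaF (p * k) = expand p hp (etaF k) := by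
  ext N
  have htrunc := X_pow_dvd_expand p hp (X_pow_dvd_etaF_sub_prod hk N)
  rw [map_sub, map_prod] at htrunc
  rw [coeff_etaF, coeff_eq_of_X_pow_dvd_sub htrunc N.lt_succ_self]
  simp only [map_sub, map_one, map_pow, expand_X, ← pow_mul, mul_assoc]

theorem map_etaF_three {R : Type*} [CommRing R] (h9 : (9 : R) = 0) :
    map (Int.castRingHom R) (etaF 3) = map (Int.castRingHom R) (etaF 1) ^ 3
      - eulerDeriv R (map (Int.castRingHom R) (etaF 1) ^ 3) := by
  ext N
  have htrunc : ∀ j, 0 < j → X ^ (N + 1) ∣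
      map (Int.castRingHom R) (etaF j) - ∏ n ∈ range N, (1 - X ^ (j * (n + 1))) := fun j hj => by
    simpa [map_prod] using map_dvd (map (Int.castRingHom R)) (X_pow_dvd_etaF_sub_prod hj N)
  have h1 := htrunc 1 one_pos
  simp only [one_mul] at h1
  set f₁ := map (Int.castRingHom R) (etaF 1)
  set f₃ := map (Int.castRingHom R) (etaF 3)
  set F := ∏ n ∈ range N, (1 - (X : R⟦X⟧) ^ (n + 1))
  set Q := ∏ n ∈ range N, (1 - (X : R⟦X⟧) ^ (3 * (n + 1)))
  have h1cube : X ^ (N + 1) ∣ f₁ ^ 3 - F ^ 3 := h1.trans (sub_dvd_pow_sub_pow _ _ 3)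
  have hsplit : f₃ - (f₁ ^ 3 - eulerDeriv R (f₁ ^ 3))
      = (f₃ - Q) - (f₁ ^ 3 - F ^ 3) + eulerDeriv R (f₁ ^ 3 - F ^ 3)
        + (Q - F ^ 3 + eulerDeriv R (F ^ 3)) := by
    rw [map_sub]; ring
  refine coeff_eq_of_X_pow_dvd_sub ?_ N.lt_succ_self
  rw [hsplit]
  exact dvd_add (dvd_add (dvd_sub (htrunc 3 three_pos) h1cube) (X_pow_dvd_eulerDeriv h1cube))
    (X_pow_dvd_prod_sub_cube_add_eulerDeriv_cube h9 N)

theorem etaU_mem_unitsEulerDerivDvd {i : ℕ} (hi : 0 < i) (h3 : 3 ∣ i) :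
    etaU i ∈ unitsEulerDerivDvd ((3 : ℕ) : ℤ⟦X⟧) := by
  obtain ⟨k, rfl⟩ := h3
  exact mem_unitsEulerDerivDvd_of_eq_expand 3 three_ne_zero
    (by rw [etaU_val, etaF_mul_eq_expand 3 three_ne_zero (by omega)])

theorem prod_etaU_zpow_mul_inv_mem {S : Finset ℕ} (hpos : ∀ i ∈ S, 0 < i) {e : ℕ → ℤ}
    (h1 : 1 ∈ S) (h1exp : ∃ k : ℤ, e 1 = 3 * k + 1)
    (hmul3 : ∀ i ∈ S, i ≠ 1 → ¬ (3 ∣ i) → (3 : ℤ) ∣ e i) :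
    (∏ i ∈ S, etaU i ^ e i) * (etaU 1)⁻¹ ∈ unitsEulerDerivDvd ((3 : ℕ) : ℤ⟦X⟧) := by
  have hcube : ∀ (v : ℤ⟦X⟧ˣ) (c : ℤ), v ^ (3 * c) ∈ unitsEulerDerivDvd ((3 : ℕ) : ℤ⟦X⟧) :=
    fun v c => by
      rw [zpow_mul', show ((3 : ℤ)) = ((3 : ℕ) : ℤ) from rfl, zpow_natCast]
      exact pow_mem_unitsEulerDerivDvd 3 _
  obtain ⟨k, hk⟩ := h1exp
  rw [← mul_prod_erase S _ h1, mul_right_comm, ← zpow_sub_one, hk, add_sub_cancel_right]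
  refine mul_mem (hcube _ k) (prod_mem fun i hi => ?_)
  obtain ⟨hi1, hiS⟩ := mem_erase.mp hi
  by_cases h3 : 3 ∣ i
  · exact zpow_mem (etaU_mem_unitsEulerDerivDvd (hpos i hiS) h3) _
  · obtain ⟨c, hc⟩ := hmul3 i hiS hi1 h3
    rw [hc]
    exact hcube _ c

theorem nine_dvd_iff_of_intCast_eq {a b : ℤ} {n : ℕ} (h : (b : ZMod 9) = (1 - 3 * n) * a) :
    9 ∣ a ↔ 9 ∣ b := by
  have hunit : IsUnit (1 - 3 * n : ZMod 9) :=
    IsUnit.of_mul_eq_one (1 + 3 * n)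
      (by linear_combination (-(n : ZMod 9) ^ 2) * (by decide : (9 : ZMod 9) = 0))
  have h9 : ∀ c : ℤ, (c : ZMod 9) = 0 ↔ 9 ∣ c := fun c => by
    exact_mod_cast ZMod.intCast_zmod_eq_zero_iff_dvd c 9
  rw [← h9 a, ← h9 b, h, hunit.mul_right_eq_zero]

theorem stmt13 (S : Finset ℕ) (hpos : ∀ i ∈ S, 0 < i) (e : ℕ → ℤ)
    (h1 : 1 ∈ S) (h1exp : ∃ k : ℤ, e 1 = 3 * k + 1)
    (hmul3 : ∀ i ∈ S, i ≠ 1 → ¬ (3 ∣ i) → (3 : ℤ) ∣ e i)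
    (A B : PowerSeries ℤ)
    (hA : A = ↑(∏ i ∈ S, (etaU i) ^ (e i)))
    (hB : B = ↑(etaU 3 * ((etaU 1) ^ 3)⁻¹) * A) :
    ∀ n : ℕ, ((9 : ℤ) ∣ PowerSeries.coeff n A ↔ (9 : ℤ) ∣ PowerSeries.coeff n B) := by
  intro n
  set φ := map (Int.castRingHom (ZMod 9))
  set U : ℤ⟦X⟧ˣ := (∏ i ∈ S, etaU i ^ e i) * (etaU 1)⁻¹
  have hAU : A = etaF 1 * U := by
    rw [hA, ← etaU_val, ← Units.val_mul, mul_comm, inv_mul_cancel_right]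
  have hBA : B = etaF 3 * ↑(etaU 1)⁻¹ ^ 3 * A := by
    rw [hB, Units.val_mul, ← inv_pow, Units.val_pow_eq_pow_val, etaU_val]
  have hf : φ (etaF 1) * φ ↑(etaU 1)⁻¹ = 1 := by
    rw [← map_mul, ← etaU_val, Units.mul_inv, map_one]
  have hU : (3 : (ZMod 9)⟦X⟧) ∣ eulerDeriv _ (φ U) := by
    obtain ⟨V, hV⟩ := prod_etaU_zpow_mul_inv_mem hpos h1 h1exp hmul3
    exact ⟨φ V, by rw [← map_eulerDeriv, hV, map_mul, map_natCast, Nat.cast_ofNat]⟩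
  have key : φ B = φ A - 3 * eulerDeriv _ (φ A) := by
    rw [hBA, hAU, map_mul, map_mul, map_pow, map_mul]
    exact mul_eq_sub_three_mul_eulerDeriv (by decide) hf (map_etaF_three (by decide)) hU
  refine nine_dvd_iff_of_intCast_eq (n := n) ?_
  have hcoeff := congrArg (coeff n) key
  rw [map_sub, ← map_ofNat C 3, coeff_C_mul, coeff_eulerDeriv] at hcoeff
  simp only [φ, coeff_map, eq_intCast] at hcoeff
  linear_combination hcoeff
end
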